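/- arXiv:2601.15249 — 2 statements merged into one kernel-verified Lean document; each statement's English description precedes it below -/
import Mathlib

section
/- Let a, b ∈ ℝⁿ with a ⪰ b (a majorizes b). Then there exist m ∈ ℕ and a finite chain of vectors a = v₀, v₁, …, v_m = b such that each v_{t+1} is obtained from v_t by a T-transform: there exist indices i ≠ j and λ ∈ [0,1] with v_{t+1} i = λ·(v_t i) + (1−λ)·(v_t j), v_{t+1} j = λ·(v_t j) + (1−λ)·(v_t i), and v_{t+1} l = v_t l for all l ∉ {i, j}. -/
/-!
Permutations are products of transpositions, and a transposition is a T-transform with `λ = 0`,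
so we may sort `a` and `b` into non-increasing order; majorization then says that every prefix
sum of `a` dominates the corresponding prefix sum of `b`. Only `b` needs to stay sorted: for any
`v ≠ b` with this prefix property, let `c` be the first index with `v c < b c`; the prefix
inequality at `c` yields `j < c` with `v j > b j`. Since `v j > b j ≥ b c > v c`, moving
`δ = min (v j - b j) (b c - v c)` from coordinate `j` to coordinate `c` is a T-transform. It keeps
the prefix property and makes one more coordinate agree with `b`.
-/

noncomputable section

/-- The sum of the `k` largest entries of `x`, i.e. the maximum of `∑ i ∈ S, x i`
over all subsets `S` of cardinality `k`. -/
def topKSum {n : ℕ} (x : Fin n → ℝ) (k : ℕ) : ℝ :=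
  sSup ((fun S : Finset (Fin n) => ∑ i ∈ S, x i) '' {S | S.card = k})

/-- `a` majorizes `b`: for every `k = 1, …, n` the sum of the `k` largest entries of
`a` is at least that of `b`, and the total sums agree. -/
def Majorizes {n : ℕ} (a b : Fin n → ℝ) : Prop :=
  (∀ k, 1 ≤ k → k ≤ n → topKSum b k ≤ topKSum a k) ∧ ∑ i, a i = ∑ i, b i

/-- `y` is obtained from `x` by a T-transform: two coordinates are replaced by
convex combinations `λ x_i + (1-λ) x_j` and `λ x_j + (1-λ) x_i`, the others kept. -/
def IsTTransform {n : ℕ} (x y : Fin n → ℝ) : Prop :=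
  ∃ (i j : Fin n) (lam : ℝ), i ≠ j ∧ 0 ≤ lam ∧ lam ≤ 1 ∧
    y i = lam * x i + (1 - lam) * x j ∧
    y j = lam * x j + (1 - lam) * x i ∧
    ∀ l : Fin n, l ≠ i → l ≠ j → y l = x l

open Finset Relation

theorem Relation.ReflTransGen.exists_seq {α : Type*} {r : α → α → Prop} {a b : α}
    (h : ReflTransGen r a b) :
    ∃ (m : ℕ) (f : ℕ → α), f 0 = a ∧ f m = b ∧ ∀ t < m, r (f t) (f (t + 1)) := by
  induction h using Relation.ReflTransGen.head_induction_on with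
  | refl => exact ⟨0, fun _ => b, rfl, rfl, by simp⟩
  | head hac _ ih =>
    obtain ⟨m, f, hf0, hfm, hf⟩ := ih
    refine ⟨m + 1, fun | 0 => _ | t + 1 => f t, rfl, hfm, ?_⟩
    rintro (_ | t) ht
    · simpa [hf0] using hac
    · exact hf t (by omega)

theorem Antitone.sum_le_sum_of_isLowerSet {ι M : Type*} [LinearOrder ι] [AddCommMonoid M]
    [PartialOrder M] [IsOrderedAddMonoid M] {x : ι → M} (hx : Antitone x) {s t : Finset ι}
    (ht : IsLowerSet (t : Set ι)) (hst : #s = #t) : ∑ i ∈ s, x i ≤ ∑ i ∈ t, x i := by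
  rw [← sum_inter_add_sum_sdiff s t, ← sum_inter_add_sum_sdiff t s, inter_comm t s]
  gcongr (∑ i ∈ s ∩ t, x i) + ?_
  obtain hst' | ⟨p, hp, hpmin⟩ := (s \ t).eq_empty_or_nonempty.imp_right
    fun h => (s \ t).exists_min_image id h
  · have hts : t \ s = ∅ := card_eq_zero.mp (by rw [← card_sdiff_comm hst, hst', card_empty])
    simp [hst', hts]
  · have hpt : p ∉ t := (mem_sdiff.mp hp).2
    calc ∑ i ∈ s \ t, x i ≤ #(s \ t) • x p := sum_le_card_nsmul _ _ _ fun r hr => hx (hpmin r hr)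
      _ = #(t \ s) • x p := by rw [card_sdiff_comm hst]
      _ ≤ ∑ i ∈ t \ s, x i := card_nsmul_le_sum _ _ _ fun q hq => hx <| le_of_lt <|
          not_le.mp fun hpq => hpt (ht hpq (mem_sdiff.mp hq).1)

section topKSum

variable {n : ℕ} (x : Fin n → ℝ)

theorem sum_le_topKSum {s : Finset (Fin n)} {k : ℕ} (hs : #s = k) :
    ∑ i ∈ s, x i ≤ topKSum x k :=
  le_csSup (Set.toFinite _).bddAbove ⟨s, hs, rfl⟩

theorem exists_sum_eq_topKSum {k : ℕ} (hk : k ≤ n) :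
    ∃ s : Finset (Fin n), #s = k ∧ ∑ i ∈ s, x i = topKSum x k := by
  obtain ⟨t, -, ht⟩ := exists_subset_card_eq (s := (univ : Finset (Fin n))) (by simpa using hk)
  have hne : ((fun s : Finset (Fin n) => ∑ i ∈ s, x i) '' {s | #s = k}).Nonempty :=
    ⟨_, t, ht, rfl⟩
  exact hne.csSup_mem (Set.toFinite _)

theorem topKSum_comp_perm (σ : Equiv.Perm (Fin n)) (k : ℕ) :
    topKSum (x ∘ σ) k = topKSum x k := by
  unfold topKSum
  congr 1
  ext r
  constructor
  · rintro ⟨s, hs, rfl⟩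
    exact ⟨s.map σ.toEmbedding, by simpa using hs, by simp [sum_map]⟩
  · rintro ⟨s, hs, rfl⟩
    exact ⟨s.map σ.symm.toEmbedding, by simpa using hs, by simp [sum_map]⟩

variable {x}

theorem Antitone.topKSum_succ_eq_sum_Iic (hx : Antitone x) (i : Fin n) :
    topKSum x (i + 1) = ∑ l ∈ Iic i, x l := by
  refine le_antisymm ?_ (sum_le_topKSum x (Fin.card_Iic i))
  obtain ⟨s, hs, hsum⟩ := exists_sum_eq_topKSum x (Nat.succ_le_of_lt i.isLt)
  rw [← hsum]
  exact hx.sum_le_sum_of_isLowerSet (by simpa using isLowerSet_Iic i)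
    (by rw [hs, Fin.card_Iic])

end topKSum

namespace Majorizes

variable {n : ℕ} {a b : Fin n → ℝ}

theorem comp_perm (h : Majorizes a b) (σ τ : Equiv.Perm (Fin n)) :
    Majorizes (a ∘ σ) (b ∘ τ) :=
  ⟨by simpa only [topKSum_comp_perm] using h.1, by simpa [Equiv.sum_comp] using h.2⟩

theorem sum_Iic_le (h : Majorizes a b) (ha : Antitone a) (hb : Antitone b) (i : Fin n) :
    ∑ l ∈ Iic i, b l ≤ ∑ l ∈ Iic i, a l := by
  rw [← ha.topKSum_succ_eq_sum_Iic, ← hb.topKSum_succ_eq_sum_Iic]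
  exact h.1 _ (Nat.succ_pos _) i.isLt

end Majorizes

theorem Tuple.exists_antitone_comp_perm {n : ℕ} {α : Type*} [LinearOrder α] (x : Fin n → α) :
    ∃ σ : Equiv.Perm (Fin n), Antitone (x ∘ σ) :=
  ⟨Tuple.sort (OrderDual.toDual ∘ x), monotone_toDual_comp_iff.mp (Tuple.monotone_sort _)⟩

section IsTTransform

variable {n : ℕ}

theorem isTTransform_comp_swap (x : Fin n → ℝ) {i j : Fin n} (hij : i ≠ j) :
    IsTTransform x (x ∘ Equiv.swap i j) :=
  ⟨i, j, 0, hij, le_rfl, zero_le_one, by simp, by simp,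
    fun l hli hlj => by simp [Equiv.swap_apply_of_ne_of_ne hli hlj]⟩

theorem isTTransform_sub_single_add_single (x : Fin n → ℝ) {i j : Fin n} (hij : i ≠ j) {δ : ℝ}
    (hδ : 0 ≤ δ) (hδx : δ ≤ x i - x j) :
    IsTTransform x (x - Pi.single i δ + Pi.single j δ) := by
  have hcancel : δ / (x i - x j) * (x i - x j) = δ :=
    div_mul_cancel_of_imp fun h => le_antisymm (h ▸ hδx) hδ
  refine ⟨i, j, 1 - δ / (x i - x j), hij, ?_, ?_, ?_, ?_, fun l hli hlj => by simp [hli, hlj]⟩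
  · linarith [div_le_one_of_le₀ hδx (hδ.trans hδx)]
  · linarith [div_nonneg hδ (hδ.trans hδx)]
  · simp only [Pi.add_apply, Pi.sub_apply, Pi.single_eq_same, Pi.single_eq_of_ne hij]
    linarith
  · simp only [Pi.add_apply, Pi.sub_apply, Pi.single_eq_same, Pi.single_eq_of_ne hij.symm]
    linarith

theorem reflTransGen_isTTransform_comp_perm (x : Fin n → ℝ) (σ : Equiv.Perm (Fin n)) :
    ReflTransGen IsTTransform x (x ∘ σ) := by
  induction σ using Equiv.Perm.swap_induction_on generalizing x with
  | one => exact .refl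
  | swap_mul σ i j hij ih =>
    exact .head (isTTransform_comp_swap x hij) (ih (x ∘ Equiv.swap i j))

end IsTTransform

section Transfer

variable {n : ℕ} {b v : Fin n → ℝ}

theorem exists_surplus_before_first_deficit (hv : ∀ i, ∑ l ∈ Iic i, b l ≤ ∑ l ∈ Iic i, v l)
    (hsum : ∑ i, v i = ∑ i, b i) (hne : v ≠ b) :
    ∃ j c, j < c ∧ b j < v j ∧ v c < b c ∧ ∀ l < c, b l ≤ v l := by
  have hdeficit : ∃ c, v c < b c := by
    by_contra! h
    exact hne (funext fun l => ((sum_eq_sum_iff_of_le fun l _ => h l).mp hsum.symm l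
      (mem_univ l)).symm)
  obtain ⟨c, hc, hcmin⟩ := exists_minimal_of_wellFoundedLT _ hdeficit
  have hbefore : ∀ l < c, b l ≤ v l := fun l hl =>
    not_lt.mp fun h => (hcmin h hl.le).not_gt hl
  have hprefix : ∑ l ∈ Iio c, b l < ∑ l ∈ Iio c, v l := by
    have := hv c
    rw [← Iio_insert, sum_insert notMem_Iio_self, sum_insert notMem_Iio_self] at this
    linarith
  obtain ⟨j, hj, hjc⟩ := exists_lt_of_sum_lt hprefix
  exact ⟨j, c, mem_Iio.mp hj, hjc, hc, hbefore⟩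

theorem exists_isTTransform_fewer_mismatches (hb : Antitone b)
    (hv : ∀ i, ∑ l ∈ Iic i, b l ≤ ∑ l ∈ Iic i, v l) (hsum : ∑ i, v i = ∑ i, b i)
    (hne : v ≠ b) :
    ∃ w, IsTTransform v w ∧ (∀ i, ∑ l ∈ Iic i, b l ≤ ∑ l ∈ Iic i, w l) ∧
      ∑ i, w i = ∑ i, b i ∧ #{l | w l ≠ b l} < #{l | v l ≠ b l} := by
  obtain ⟨j, c, hjc, hj, hc, hbefore⟩ := exists_surplus_before_first_deficit hv hsum hne
  set δ := min (v j - b j) (b c - v c)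
  have hδ : 0 < δ := lt_min (by linarith) (by linarith)
  have hbjc : b c ≤ b j := hb hjc.le
  set w := v - Pi.single j δ + Pi.single c δ
  have hsum_w (s : Finset (Fin n)) :
      ∑ l ∈ s, w l = ∑ l ∈ s, v l - (if j ∈ s then δ else 0) + (if c ∈ s then δ else 0) := by
    simp [w, sum_add_distrib, sum_sub_distrib, sum_pi_single']
  refine ⟨w, isTTransform_sub_single_add_single v hjc.ne hδ.le ?_, fun i => ?_, ?_, ?_⟩
  · linarith [min_le_left (v j - b j) (b c - v c)]
  · rw [hsum_w]
    by_cases hci : c ≤ i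
    · simp [hci, hjc.le.trans hci, hv i]
    by_cases hji : j ≤ i
    · -- every coordinate before the first deficit `c` has a surplus, so the slack is ≥ v j - b j
      have hslack : v j - b j ≤ ∑ l ∈ Iic i, (v l - b l) :=
        single_le_sum (f := fun l => v l - b l)
          (fun l hl => sub_nonneg.mpr (hbefore l ((mem_Iic.mp hl).trans_lt (not_le.mp hci))))
          (mem_Iic.mpr hji)
      rw [sum_sub_distrib] at hslack
      simp only [mem_Iic, hji, hci, if_true, if_false]
      linarith [min_le_left (v j - b j) (b c - v c)]
    · simp [hci, hji, hv i]
  · simp [hsum_w, hsum]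
  · apply card_lt_card
    rw [ssubset_iff_of_subset]
    · rcases min_choice (v j - b j) (b c - v c) with h | h
      · exact ⟨j, by simp [hj.ne'], by simp [w, hjc.ne, δ, h]⟩
      · exact ⟨c, by simp [hc.ne], by simp [w, hjc.ne', δ, h]⟩
    · intro l
      by_cases hlj : l = j
      · simp [hlj, hj.ne']
      by_cases hlc : l = c
      · simp [hlc, hc.ne]
      simp [w, hlj, hlc]

theorem reflTransGen_isTTransform_of_sum_Iic_le (hb : Antitone b)
    (hv : ∀ i, ∑ l ∈ Iic i, b l ≤ ∑ l ∈ Iic i, v l) (hsum : ∑ i, v i = ∑ i, b i) :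
    ReflTransGen IsTTransform v b := by
  induction hd : #{l | v l ≠ b l} using Nat.strong_induction_on generalizing v with
  | _ d ih =>
    by_cases hne : v = b
    · exact hne ▸ .refl
    obtain ⟨w, hvw, hw, hwsum, hwd⟩ := exists_isTTransform_fewer_mismatches hb hv hsum hne
    exact .head hvw (ih _ (hd ▸ hwd) hw hwsum rfl)

end Transfer

/-- If `a ⪰ b`, then `b` can be derived from `a` by finitely many T-transforms. -/
theorem majorizes_iff_chain_of_Ttransforms
    {n : ℕ} (a b : Fin n → ℝ) (hab : Majorizes a b) :
    ∃ (m : ℕ) (v : ℕ → Fin n → ℝ), v 0 = a ∧ v m = b ∧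
      ∀ t < m, IsTTransform (v t) (v (t + 1)) := by
  obtain ⟨σ, hσ⟩ := Tuple.exists_antitone_comp_perm a
  obtain ⟨τ, hτ⟩ := Tuple.exists_antitone_comp_perm b
  have hsorted : Majorizes (a ∘ σ) (b ∘ τ) := hab.comp_perm σ τ
  have hunsort : ReflTransGen IsTTransform (b ∘ τ) b := by
    simpa [Function.comp_assoc] using reflTransGen_isTTransform_comp_perm (b ∘ τ) τ⁻¹
  exact ReflTransGen.exists_seq <| (reflTransGen_isTTransform_comp_perm a σ).trans <|
    (reflTransGen_isTTransform_of_sum_Iic_le hτ (hsorted.sum_Iic_le hσ hτ) hsorted.2).trans hunsort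
end
end

section
/- Let R ∈ ℝⁿ have nonincreasing coordinates (R₁ ≥ R₂ ≥ ⋯ ≥ R_n), let e ∈ ℝⁿ be arbitrary, and let σ be a permutation of {1,…,n}. Write R^σ for the vector with (R^σ)_i = R_{σ(i)}. Let p be an isotonic projection of R + e onto K_n and let q be an isotonic projection of R^σ + e onto K_n. Then p ⪰ q. -/
noncomputable section

/-- The monotone (isotonic) cone of nonincreasing vectors in `ℝⁿ`. -/
def monoCone (n : ℕ) : Set (EuclideanSpace ℝ (Fin n)) :=
  {x | ∀ i j : Fin n, i ≤ j → x j ≤ x i}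

/-- `p` is an isotonic projection of `y` onto the monotone cone. -/
def IsIsoProj {n : ℕ} (y p : EuclideanSpace ℝ (Fin n)) : Prop :=
  p ∈ monoCone n ∧ ∀ w ∈ monoCone n, ‖y - p‖ ≤ ‖y - w‖

/-!
The prefix sums `P` of an isotonic projection `p` of `y` form the least concave majorant of the
prefix sums `Y` of `y`: testing the variational inequality of the projection against
`p + c • 1_{[0, k)}` gives `Y ≤ P` with equality at `n`, and shows that `p` is flat at every
index where `P` does not touch `Y`. Permuting the nonincreasing `R` can only lower its prefix
sums, so `Z ≤ Y` for `z = R ∘ σ + e`. Then `Q - P` is nonpositive at the ends and midpoint-convex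
wherever it is positive (there `Q > P ≥ Y ≥ Z`, so `Q` is affine while `P` is concave), and a
discrete maximum principle gives `Q ≤ P`. For nonincreasing vectors the top-`k` sums are the
prefix sums, so this is the majorization `p ⪰ q`.
-/

theorem Finset.sum_le_sum_of_card_eq_of_forall_le {ι M : Type*} [AddCommMonoid M] [LinearOrder M]
    [IsOrderedAddMonoid M] {f : ι → M} {s t : Finset ι}
    (hcard : s.card = t.card) (h : ∀ a ∈ s, ∀ b ∈ t, f a ≤ f b) :
    ∑ a ∈ s, f a ≤ ∑ b ∈ t, f b := by
  rcases s.eq_empty_or_nonempty with rfl | hs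
  · rw [Finset.card_empty, eq_comm, Finset.card_eq_zero] at hcard
    simp [hcard]
  calc ∑ a ∈ s, f a ≤ s.card • s.sup' hs f :=
        Finset.sum_le_card_nsmul _ _ _ fun a ha => Finset.le_sup' f ha
    _ = t.card • s.sup' hs f := by rw [hcard]
    _ ≤ ∑ b ∈ t, f b :=
      Finset.card_nsmul_le_sum _ _ _ fun b hb => Finset.sup'_le hs f fun a ha => h a ha b hb

theorem nonpos_of_forall_pos_two_mul_le_add {n : ℕ} {D : ℕ → ℝ}
    (h0 : D 0 ≤ 0) (hn : D n ≤ 0)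
    (hD : ∀ k, k + 2 ≤ n → 0 < D (k + 1) → 2 * D (k + 1) ≤ D k + D (k + 2)) :
    ∀ k ≤ n, D k ≤ 0 := by
  classical
  by_contra! hpos
  obtain ⟨k, hkn, hk⟩ := hpos
  obtain ⟨m, hm, hmax⟩ := (Finset.range (n + 1)).exists_max_image D ⟨0, by simp⟩
  -- The leftmost maximiser of `D` has `D > 0`, so it is interior and `D` is midpoint-convex
  -- there, which makes its left neighbour a maximiser as well.
  have hex : ∃ j, j ≤ n ∧ D m ≤ D j := ⟨m, Finset.mem_range_succ_iff.1 hm, le_rfl⟩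
  obtain ⟨hjn, hj⟩ := Nat.find_spec hex
  have hDj : 0 < D (Nat.find hex) :=
    hk.trans_le ((hmax k (Finset.mem_range_succ_iff.2 hkn)).trans hj)
  obtain ⟨i, hi⟩ : ∃ i, Nat.find hex = i + 1 := Nat.exists_eq_succ_of_ne_zero fun h => by
    rw [h] at hDj; linarith
  rw [hi] at hjn hDj hj
  have hi2 : i + 2 ≤ n := by
    rcases hjn.lt_or_eq with h | h
    · omega
    · rw [h] at hDj; linarith
  have hDi : D m ≤ D i := by
    have := hD i hi2 hDj
    have := hmax (i + 2) (by simp; omega)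
    linarith
  exact Nat.find_min hex (show i < Nat.find hex by omega) ⟨by omega, hDi⟩

section

variable {n : ℕ}

def prefixSum (x : Fin n → ℝ) (k : ℕ) : ℝ := ∑ i : Fin n with i.val < k, x i

theorem prefixSum_zero (x : Fin n → ℝ) : prefixSum x 0 = 0 := by simp [prefixSum]

theorem prefixSum_self (x : Fin n → ℝ) : prefixSum x n = ∑ i, x i := by
  simp [prefixSum]

theorem prefixSum_succ (x : Fin n → ℝ) {k : ℕ} (hk : k < n) :
    prefixSum x (k + 1) = prefixSum x k + x ⟨k, hk⟩ := by
  have : ({i | i.val < k + 1} : Finset (Fin n)) =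
      insert ⟨k, hk⟩ ({i | i.val < k} : Finset (Fin n)) := by
    ext i; simp [Fin.ext_iff]; omega
  rw [prefixSum, prefixSum, this, Finset.sum_insert (by simp), add_comm]

theorem prefixSum_add (x y : Fin n → ℝ) (k : ℕ) :
    prefixSum (x + y) k = prefixSum x k + prefixSum y k := Finset.sum_add_distrib

theorem sum_le_prefixSum_card {x : Fin n → ℝ} (hx : Antitone x) (s : Finset (Fin n)) :
    ∑ i ∈ s, x i ≤ prefixSum x s.card := by
  set t : Finset (Fin n) := {i | i.val < s.card}
  have hcard : s.card = t.card := by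
    simp [t, Fin.card_filter_val_lt, (Finset.card_le_univ s).trans_eq (Fintype.card_fin n)]
  rw [prefixSum, ← sub_nonpos, ← Finset.sum_sdiff_sub_sum_sdiff, sub_nonpos]
  refine Finset.sum_le_sum_of_card_eq_of_forall_le (Finset.card_sdiff_comm hcard)
    fun a ha b hb => hx ?_
  simp only [Finset.mem_sdiff, Finset.mem_filter_univ] at ha hb
  exact Fin.le_def.2 (by omega)

theorem topKSum_eq_prefixSum {x : Fin n → ℝ} (hx : Antitone x) {k : ℕ} (hk : k ≤ n) :
    topKSum x k = prefixSum x k := by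
  refine IsGreatest.csSup_eq ⟨⟨({i | i.val < k} : Finset (Fin n)), ?_, rfl⟩, ?_⟩
  · simp [Fin.card_filter_val_lt, hk]
  · rintro _ ⟨s, rfl, rfl⟩
    exact sum_le_prefixSum_card hx s

theorem prefixSum_comp_perm_le {x : Fin n → ℝ} (hx : Antitone x) (σ : Equiv.Perm (Fin n))
    {k : ℕ} (hk : k ≤ n) : prefixSum (x ∘ σ) k ≤ prefixSum x k := by
  set s := ({i | i.val < k} : Finset (Fin n)).map σ.toEmbedding
  calc prefixSum (x ∘ σ) k = ∑ i ∈ s, x i := by rw [prefixSum, Finset.sum_map]; rfl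
    _ ≤ prefixSum x k := by
      simpa [s, Fin.card_filter_val_lt, hk] using sum_le_prefixSum_card hx s

open scoped InnerProductSpace

theorem convex_monoCone : Convex ℝ (monoCone n) := by
  intro x hx y hy a b ha hb _ i j hij
  simp only [PiLp.add_apply, PiLp.smul_apply, smul_eq_mul]
  gcongr
  exacts [hx i j hij, hy i j hij]

theorem IsIsoProj.inner_sub_nonpos {y p w : EuclideanSpace ℝ (Fin n)} (hp : IsIsoProj y p)
    (hw : w ∈ monoCone n) : ⟪y - p, w - p⟫_ℝ ≤ 0 := by
  have : Nonempty (monoCone n) := ⟨⟨p, hp.1⟩⟩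
  refine (norm_eq_iInf_iff_real_inner_le_zero convex_monoCone hp.1).1 ?_ w hw
  have hbdd : BddBelow (Set.range fun w : monoCone n => ‖y - w‖) :=
    ⟨0, Set.forall_mem_range.2 fun _ => norm_nonneg _⟩
  exact le_antisymm (le_ciInf fun w => hp.2 w w.2) (ciInf_le hbdd ⟨p, hp.1⟩)

theorem IsIsoProj.mul_prefixSum_sub_nonpos {y p : EuclideanSpace ℝ (Fin n)} (hp : IsIsoProj y p)
    {c : ℝ} {k : ℕ} (hw : Antitone fun i => p i + if i.val < k then c else 0) :
    c * (prefixSum y k - prefixSum p k) ≤ 0 := by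
  have := hp.inner_sub_nonpos (w := WithLp.toLp 2 fun i => p i + if i.val < k then c else 0) hw
  rw [prefixSum, prefixSum, ← Finset.sum_sub_distrib, Finset.mul_sum, Finset.sum_filter]
  simpa [PiLp.inner_apply, mul_comm] using this

theorem IsIsoProj.prefixSum_le {y p : EuclideanSpace ℝ (Fin n)} (hp : IsIsoProj y p) (k : ℕ) :
    prefixSum y k ≤ prefixSum p k := by
  have hind : Antitone fun i : Fin n => if i.val < k then (1 : ℝ) else 0 := fun i j hij => by
    by_cases hj : j.val < k
    · simp [hj, (Fin.le_def.1 hij).trans_lt hj]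
    · simp only [hj, if_false]
      split_ifs <;> norm_num
  have := hp.mul_prefixSum_sub_nonpos ((show Antitone p from hp.1).add hind)
  linarith

theorem IsIsoProj.sum_eq {y p : EuclideanSpace ℝ (Fin n)} (hp : IsIsoProj y p) :
    ∑ i, p i = ∑ i, y i := by
  have := hp.mul_prefixSum_sub_nonpos (c := -1) (k := n) (by
    simpa using (show Antitone p from hp.1).add_const (-1))
  rw [← prefixSum_self, ← prefixSum_self]
  linarith [hp.prefixSum_le n]

theorem IsIsoProj.prefixSum_eq_or_apply_succ_eq {y p : EuclideanSpace ℝ (Fin n)}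
    (hp : IsIsoProj y p) {k : ℕ} (hk : k + 1 < n) :
    prefixSum p (k + 1) = prefixSum y (k + 1) ∨ p ⟨k + 1, hk⟩ = p ⟨k, by omega⟩ := by
  have hanti : Antitone p := hp.1
  set c := p ⟨k + 1, hk⟩ - p ⟨k, by omega⟩
  have hc : c ≤ 0 := sub_nonpos.2 (hanti (Fin.le_def.2 (by simp)))
  have hw : Antitone fun i => p i + if i.val < k + 1 then c else 0 := by
    intro i j hij
    have hpij := hanti hij
    simp only
    split_ifs with hj hi hi
    · linarith
    · exact absurd (lt_of_le_of_lt (Fin.le_def.1 hij) hj) hi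
    · have := hanti (show i ≤ ⟨k, by omega⟩ from Fin.le_def.2 (by simp; omega))
      have := hanti (show (⟨k + 1, hk⟩ : Fin n) ≤ j from Fin.le_def.2 (by simp; omega))
      linarith
    · linarith
  have hprod : c * (prefixSum y (k + 1) - prefixSum p (k + 1)) = 0 :=
    le_antisymm (hp.mul_prefixSum_sub_nonpos hw)
      (mul_nonneg_of_nonpos_of_nonpos hc (sub_nonpos.2 (hp.prefixSum_le (k + 1))))
  rcases mul_eq_zero.1 hprod with h | h
  · exact Or.inr (sub_eq_zero.1 h)
  · exact Or.inl (sub_eq_zero.1 h).symm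

theorem IsIsoProj.prefixSum_le_prefixSum {y z p q : EuclideanSpace ℝ (Fin n)}
    (hp : IsIsoProj y p) (hq : IsIsoProj z q) (hzy : ∀ k ≤ n, prefixSum z k ≤ prefixSum y k) :
    ∀ k ≤ n, prefixSum q k ≤ prefixSum p k := by
  suffices h : ∀ k ≤ n, prefixSum q k - prefixSum p k ≤ 0 from
    fun k hk => sub_nonpos.1 (h k hk)
  refine nonpos_of_forall_pos_two_mul_le_add (by simp [prefixSum_zero]) ?_ fun k hk hpos => ?_
  · have hsum := hzy n le_rfl
    simp only [prefixSum_self, hp.sum_eq, hq.sum_eq] at hsum ⊢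
    linarith
  · rcases hq.prefixSum_eq_or_apply_succ_eq (show k + 1 < n by omega) with hcontact | hflat
    · linarith [hzy (k + 1) (by omega), hp.prefixSum_le (k + 1)]
    · have hpk : p ⟨k + 1, by omega⟩ ≤ p ⟨k, by omega⟩ :=
        hp.1 _ _ (Fin.le_def.2 (by simp))
      rw [prefixSum_succ _ (show k + 1 < n by omega), prefixSum_succ _ (show k + 1 < n by omega),
        prefixSum_succ _ (show k < n by omega), prefixSum_succ _ (show k < n by omega), hflat]
      linarith

end

/-- If `R` is nonincreasing, the isotonic projection of `R + e` majorizes the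
isotonic projection of `R ∘ σ + e` for any permutation `σ` and any `e`. -/
theorem isoProj_true_ranking_majorizes_permuted
    {n : ℕ} (R e : EuclideanSpace ℝ (Fin n))
    (hR : ∀ i j : Fin n, i ≤ j → R j ≤ R i)
    (σ : Equiv.Perm (Fin n))
    (p q : EuclideanSpace ℝ (Fin n))
    (hp : IsIsoProj (R + e) p)
    (hq : IsIsoProj ((WithLp.toLp 2 (fun i => R (σ i) + e i) : EuclideanSpace ℝ (Fin n))) q) :
    Majorizes (p : Fin n → ℝ) (q : Fin n → ℝ) := by
  have hzy : ∀ k ≤ n, prefixSum (fun i => R (σ i) + e i) k ≤ prefixSum (R + e) k :=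
    fun k hk => by
      change prefixSum (⇑R ∘ σ + ⇑e) k ≤ prefixSum ⇑(R + e) k
      rw [WithLp.ofLp_add, prefixSum_add, prefixSum_add]
      linarith [prefixSum_comp_perm_le hR σ hk]
  refine ⟨fun k _ hk => ?_, ?_⟩
  · rw [topKSum_eq_prefixSum hq.1 hk, topKSum_eq_prefixSum hp.1 hk]
    exact hp.prefixSum_le_prefixSum hq hzy k hk
  · rw [hp.sum_eq, hq.sum_eq]
    simp [Finset.sum_add_distrib, Equiv.sum_comp σ R]
end
end
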